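/- arXiv:2401.04894 — 3 statements merged into one kernel-verified Lean document; each statement's English description precedes it below -/
import Mathlib

section
/- Let r be a positive integer and let F be a graph with at least one edge such that no single vertex of F is incident to all edges of F (equivalently, F is not a subgraph of any star). Then ex(n, S_r, F) = (1/r! + o(1)) · ex_r(n, F) as n → ∞; that is, the ratio ex(n, S_r, F) / ex_r(n, F) tends to 1/r! as n tends to infinity. -/
/-!
Since `r! N(S_r, G) = ∑ᵥ d(v)(d(v) - 1)⋯(d(v) - r + 1) ≤ e_r(G)`, always
`r! ex(n, S_r, F) ≤ ex_r(n, F)`. Conversely `d^r` exceeds the falling factorial by at most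
`r (r - 1) d^(r-1)`, and splitting the vertices at degree `T` gives
`∑ᵥ d(v)^(r-1) ≤ n T^(r-1) + e_r(G) / T`. For an `F`-free graph attaining `ex_r(n, F)`
this yields `ex_r(n, F) ≤ r! ex(n, S_r, F) + r (r - 1) (n T^(r-1) + ex_r(n, F) / T)`.
Since `F` is not contained in a star, the star `K_{1,n-1}` is `F`-free, so
`ex_r(n, F) ≥ (n - 1)^r`; for `r ≥ 2` the term `n T^(r-1)` is then negligible, and for `r ≤ 1`
the error term vanishes. Letting `n → ∞` and then `T → ∞` gives the limit `1 / r!`.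
-/

open Finset

/-- Build a simple graph from an arbitrary relation by symmetrizing it and
removing loops. -/
def mkGraph {V : Type*} (r : V → V → Prop) : SimpleGraph V where
  Adj v w := v ≠ w ∧ (r v w ∨ r w v)
  symm := ⟨fun _ _ h => ⟨h.1.symm, h.2.symm⟩⟩
  loopless := ⟨fun _ h => h.1 rfl⟩

/-- `G` contains a copy of `F` as a (not necessarily induced) subgraph. -/
def Contains {α β : Type*} (F : SimpleGraph α) (G : SimpleGraph β) : Prop :=
  ∃ f : α ↪ β, ∀ a b, F.Adj a b → G.Adj (f a) (f b)

/-- `e_r(G)`, the sum of the `r`-th powers of the degrees of `G`. -/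
noncomputable def degPow {β : Type*} [Fintype β] (G : SimpleGraph β) (r : ℕ) : ℕ :=
  ∑ v, ((G.neighborSet v).ncard) ^ r

/-- `N(S_p, G) = ∑_v C(d(v), p)`, the number of copies of the star `S_p` in `G`. -/
noncomputable def starCount {β : Type*} [Fintype β] (G : SimpleGraph β) (p : ℕ) : ℕ :=
  ∑ v, ((G.neighborSet v).ncard).choose p

/-- The number of edges of `G`. -/
noncomputable def edgeCount {β : Type*} (G : SimpleGraph β) : ℕ :=
  G.edgeSet.ncard

/-- `ex_r(n, F)`: the largest value of `e_r(G)` over `F`-free graphs `G` on `n` vertices. -/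
noncomputable def exDegPow {α : Type*} (n r : ℕ) (F : SimpleGraph α) : ℕ :=
  sSup {m | ∃ G : SimpleGraph (Fin n), ¬ Contains F G ∧ degPow G r = m}

/-- `ex(n, S_p, F)`: the largest number of copies of the star `S_p` in an `F`-free
graph on `n` vertices. -/
noncomputable def exStarCount {α : Type*} (n p : ℕ) (F : SimpleGraph α) : ℕ :=
  sSup {m | ∃ G : SimpleGraph (Fin n), ¬ Contains F G ∧ starCount G p = m}


open Filter Topology

namespace Nat

theorem pow_le_descFactorial_add (s d : ℕ) :
    d ^ (s + 1) ≤ d.descFactorial (s + 1) + (s + 1) * s * d ^ s := by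
  induction s with
  | zero => simp
  | succ s ih =>
    have hD : d.descFactorial (s + 1) ≤ d ^ (s + 1) := d.descFactorial_le_pow (s + 1)
    have hstep : d * d.descFactorial (s + 1) ≤
        d.descFactorial (s + 2) + (s + 1) * d.descFactorial (s + 1) := by
      rw [Nat.descFactorial_succ d (s + 1), ← add_mul]
      exact Nat.mul_le_mul_right _ (by omega)
    calc d ^ (s + 2) = d * d ^ (s + 1) := by ring
      _ ≤ d * (d.descFactorial (s + 1) + (s + 1) * s * d ^ s) := Nat.mul_le_mul_left d ih
      _ = d * d.descFactorial (s + 1) + (s + 1) * s * d ^ (s + 1) := by ring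
      _ ≤ d.descFactorial (s + 2) + (s + 1) * d ^ (s + 1) + (s + 1) * s * d ^ (s + 1) := by
        have := Nat.mul_le_mul_left (s + 1) hD
        omega
      _ = d.descFactorial (s + 2) + (s + 1) * (s + 1) * d ^ (s + 1) := by ring
      _ ≤ d.descFactorial (s + 2) + (s + 2) * (s + 1) * d ^ (s + 1) := by gcongr; omega

theorem mul_pow_le_pow_add_pow (T d s : ℕ) : T * d ^ s ≤ T ^ (s + 1) + d ^ (s + 1) := by
  rcases le_total d T with h | h
  · calc T * d ^ s ≤ T * T ^ s := Nat.mul_le_mul_left T (Nat.pow_le_pow_left h s)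
      _ = T ^ (s + 1) := by ring
      _ ≤ T ^ (s + 1) + d ^ (s + 1) := Nat.le_add_right _ _
  · calc T * d ^ s ≤ d * d ^ s := Nat.mul_le_mul_right _ h
      _ = d ^ (s + 1) := by ring
      _ ≤ T ^ (s + 1) + d ^ (s + 1) := Nat.le_add_left _ _

theorem mul_pow_le_mul_descFactorial_add (T d r : ℕ) :
    T * d ^ r ≤ T * d.descFactorial r + r * (r - 1) * (T ^ r + d ^ r) := by
  rcases r with _ | s
  · simp
  · calc T * d ^ (s + 1) ≤ T * (d.descFactorial (s + 1) + (s + 1) * s * d ^ s) :=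
          Nat.mul_le_mul_left T (pow_le_descFactorial_add s d)
      _ = T * d.descFactorial (s + 1) + (s + 1) * s * (T * d ^ s) := by ring
      _ ≤ T * d.descFactorial (s + 1) + (s + 1) * s * (T ^ (s + 1) + d ^ (s + 1)) := by
        gcongr
        exact mul_pow_le_pow_add_pow T d s
      _ = _ := by simp

end Nat

section DegreeSums

variable {V : Type*} [Fintype V] (G : SimpleGraph V)

theorem factorial_mul_starCount (r : ℕ) :
    r.factorial * starCount G r = ∑ v, ((G.neighborSet v).ncard).descFactorial r := by
  simp only [starCount, Finset.mul_sum, Nat.descFactorial_eq_factorial_mul_choose]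

theorem factorial_mul_starCount_le_degPow (r : ℕ) :
    r.factorial * starCount G r ≤ degPow G r := by
  rw [factorial_mul_starCount, degPow]
  exact Finset.sum_le_sum fun v _ => Nat.descFactorial_le_pow _ _

theorem mul_degPow_le (T r : ℕ) :
    T * degPow G r ≤
      T * (r.factorial * starCount G r) + r * (r - 1) * (Fintype.card V * T ^ r + degPow G r) := by
  calc T * degPow G r = ∑ v, T * (G.neighborSet v).ncard ^ r := Finset.mul_sum _ _ _
    _ ≤ ∑ v, (T * ((G.neighborSet v).ncard).descFactorial r +
          r * (r - 1) * (T ^ r + (G.neighborSet v).ncard ^ r)) :=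
      Finset.sum_le_sum fun v _ => Nat.mul_pow_le_mul_descFactorial_add _ _ _
    _ = _ := by
      simp only [factorial_mul_starCount, degPow, Finset.sum_add_distrib, ← Finset.mul_sum,
        Finset.sum_const, Finset.card_univ, smul_eq_mul, mul_add]

end DegreeSums

section Extremal

variable {α : Type*} (F : SimpleGraph α)

theorem not_contains_bot (hedge : ∃ a b, F.Adj a b) {V : Type*} :
    ¬ Contains F (⊥ : SimpleGraph V) := by
  rintro ⟨f, hf⟩
  obtain ⟨a, b, hab⟩ := hedge
  exact hf a b hab

theorem not_contains_star (hedge : ∃ a b, F.Adj a b)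
    (hnostar : ∀ v : α, ∃ a b, F.Adj a b ∧ a ≠ v ∧ b ≠ v) {V : Type*} (c : V) :
    ¬ Contains F (mkGraph fun v _ => v = c) := by
  rintro ⟨f, hf⟩
  have hcenter : ∀ {a b}, F.Adj a b → f a = c ∨ f b = c := fun h => (hf _ _ h).2
  have hmiss : ∀ v, f v ≠ c := by
    intro v hv
    obtain ⟨a, b, hab, ha, hb⟩ := hnostar v
    rcases hcenter hab with h | h
    · exact ha (f.injective (h.trans hv.symm))
    · exact hb (f.injective (h.trans hv.symm))
  obtain ⟨a, b, hab⟩ := hedge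
  exact (hcenter hab).elim (hmiss a) (hmiss b)

theorem ncard_neighborSet_star {V : Type*} [Fintype V] (c : V) :
    ((mkGraph fun v _ => v = c).neighborSet c).ncard = Fintype.card V - 1 := by
  have hnbr : (mkGraph fun v _ => v = c).neighborSet c = {c}ᶜ := by
    ext w
    simp [mkGraph, eq_comm]
  rw [hnbr, Set.ncard_compl, Set.ncard_singleton, Nat.card_eq_fintype_card]

theorem finite_setOf_exists_and_eq {ι β : Type*} [Finite ι] (P : ι → Prop) (f : ι → β) :
    {m | ∃ i, P i ∧ f i = m}.Finite :=
  (Set.toFinite {i | P i}).image f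

theorem degPow_le_exDegPow {n : ℕ} {G : SimpleGraph (Fin n)} (hG : ¬ Contains F G) (r : ℕ) :
    degPow G r ≤ exDegPow n r F :=
  le_csSup (finite_setOf_exists_and_eq _ _).bddAbove ⟨G, hG, rfl⟩

theorem starCount_le_exStarCount {n : ℕ} {G : SimpleGraph (Fin n)} (hG : ¬ Contains F G)
    (r : ℕ) :
    starCount G r ≤ exStarCount n r F :=
  le_csSup (finite_setOf_exists_and_eq _ _).bddAbove ⟨G, hG, rfl⟩

theorem exists_degPow_eq_exDegPow (hedge : ∃ a b, F.Adj a b) (n r : ℕ) :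
    ∃ G : SimpleGraph (Fin n), ¬ Contains F G ∧ degPow G r = exDegPow n r F := by
  refine Set.Nonempty.csSup_mem ?_ (finite_setOf_exists_and_eq _ _)
  exact ⟨_, ⊥, not_contains_bot F hedge, rfl⟩

theorem exists_starCount_eq_exStarCount (hedge : ∃ a b, F.Adj a b) (n r : ℕ) :
    ∃ G : SimpleGraph (Fin n), ¬ Contains F G ∧ starCount G r = exStarCount n r F := by
  refine Set.Nonempty.csSup_mem ?_ (finite_setOf_exists_and_eq _ _)
  exact ⟨_, ⊥, not_contains_bot F hedge, rfl⟩

theorem factorial_mul_exStarCount_le (hedge : ∃ a b, F.Adj a b) (n r : ℕ) :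
    r.factorial * exStarCount n r F ≤ exDegPow n r F := by
  obtain ⟨G, hG, hGA⟩ := exists_starCount_eq_exStarCount F hedge n r
  rw [← hGA]
  exact (factorial_mul_starCount_le_degPow G r).trans (degPow_le_exDegPow F hG r)

theorem mul_exDegPow_le (hedge : ∃ a b, F.Adj a b) (n T r : ℕ) :
    T * exDegPow n r F ≤
      T * (r.factorial * exStarCount n r F) + r * (r - 1) * (n * T ^ r + exDegPow n r F) := by
  obtain ⟨G, hG, hGB⟩ := exists_degPow_eq_exDegPow F hedge n r
  have hGA := starCount_le_exStarCount F hG r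
  rw [← hGB]
  have hbound := mul_degPow_le G T r
  rw [Fintype.card_fin] at hbound
  exact hbound.trans (by gcongr)

theorem pow_pred_le_exDegPow (hedge : ∃ a b, F.Adj a b)
    (hnostar : ∀ v : α, ∃ a b, F.Adj a b ∧ a ≠ v ∧ b ≠ v) {n : ℕ} (hn : 0 < n)
    (r : ℕ) :
    (n - 1) ^ r ≤ exDegPow n r F := by
  let c : Fin n := ⟨0, hn⟩
  let S : SimpleGraph (Fin n) := mkGraph fun v _ => v = c
  calc (n - 1) ^ r = (S.neighborSet c).ncard ^ r := by
        rw [ncard_neighborSet_star, Fintype.card_fin]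
    _ ≤ degPow S r :=
      Finset.single_le_sum (f := fun v => (S.neighborSet v).ncard ^ r) (fun _ _ => Nat.zero_le _)
        (Finset.mem_univ c)
    _ ≤ exDegPow n r F := degPow_le_exDegPow F (not_contains_star F hedge hnostar c) r

theorem sq_le_four_mul_exDegPow (hedge : ∃ a b, F.Adj a b)
    (hnostar : ∀ v : α, ∃ a b, F.Adj a b ∧ a ≠ v ∧ b ≠ v) {n r : ℕ} (hn : 2 ≤ n)
    (hr : 2 ≤ r) :
    n ^ 2 ≤ 4 * exDegPow n r F :=
  calc n ^ 2 ≤ (2 * (n - 1)) ^ 2 := Nat.pow_le_pow_left (by omega) 2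
    _ = 4 * (n - 1) ^ 2 := by ring
    _ ≤ 4 * (n - 1) ^ r := by gcongr; omega
    _ ≤ 4 * exDegPow n r F := by gcongr; exact pow_pred_le_exDegPow F hedge hnostar (by omega) r

theorem tendsto_natCast_div_exDegPow (hedge : ∃ a b, F.Adj a b)
    (hnostar : ∀ v : α, ∃ a b, F.Adj a b ∧ a ≠ v ∧ b ≠ v) {r : ℕ} (hr : 2 ≤ r) :
    Tendsto (fun n : ℕ => (n : ℝ) / exDegPow n r F) atTop (𝓝 0) := by
  refine squeeze_zero' (Eventually.of_forall fun n => by positivity) ?_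
    (tendsto_const_div_atTop_nhds_zero_nat 4)
  filter_upwards [eventually_ge_atTop 2] with n hn
  have hsq : ((n ^ 2 : ℕ) : ℝ) ≤ ((4 * exDegPow n r F : ℕ) : ℝ) := by
    exact_mod_cast sq_le_four_mul_exDegPow F hedge hnostar hn hr
  push_cast at hsq
  have hn0 : (0 : ℝ) < n := by positivity
  have hB : (0 : ℝ) < exDegPow n r F := by nlinarith
  rw [div_le_div_iff₀ hB hn0]
  nlinarith

end Extremal

theorem tendsto_div_nhds_one_of_forall_mul_le {a b : ℕ → ℝ} {L : ℝ} {r : ℕ}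
    (hpos : ∀ᶠ n in atTop, 0 < b n) (hle : ∀ n, a n ≤ b n)
    (hgap : ∀ n (T : ℕ), T * b n ≤ T * a n + L * (n * T ^ r + b n))
    (hsmall : Tendsto (fun n : ℕ => L * n / b n) atTop (𝓝 0)) :
    Tendsto (fun n => a n / b n) atTop (𝓝 1) := by
  refine tendsto_order.2 ⟨fun x hx => ?_, fun x hx => ?_⟩
  · obtain ⟨T, hT⟩ := exists_nat_gt (max (2 * L / (1 - x)) 0)
    have hε : 0 < 1 - x := by linarith
    have hT0 : (0 : ℝ) < T := (le_max_right _ _).trans_lt hT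
    have hLT : L < (1 - x) / 2 * T := by
      have := (le_max_left _ _).trans_lt hT
      rw [div_lt_iff₀ hε] at this
      linarith
    have hδ : 0 < (1 - x) / 2 * T / T ^ r := by positivity
    filter_upwards [hpos, hsmall.eventually (gt_mem_nhds hδ)] with n hb hLn
    rw [div_lt_div_iff₀ hb (by positivity)] at hLn
    have hgapn := hgap n T
    rw [lt_div_iff₀ hb]
    nlinarith [mul_lt_mul_of_pos_right hLT hb]
  · filter_upwards [hpos] with n hb
    exact ((div_le_one hb).2 (hle n)).trans_lt hx

theorem stmt_0_general {α : Type*} (r : ℕ) (F : SimpleGraph α)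
    (hedge : ∃ a b, F.Adj a b)
    (hnostar : ∀ v : α, ∃ a b, F.Adj a b ∧ a ≠ v ∧ b ≠ v) :
    Filter.Tendsto (fun n : ℕ => (exStarCount n r F : ℝ) / (exDegPow n r F : ℝ))
      Filter.atTop (nhds (1 / (Nat.factorial r : ℝ))) := by
  have hpos : ∀ᶠ n : ℕ in atTop, (0 : ℝ) < exDegPow n r F := by
    filter_upwards [eventually_ge_atTop 2] with n hn
    exact_mod_cast (Nat.one_le_pow _ _ (by omega)).trans
      (pow_pred_le_exDegPow F hedge hnostar (by omega) r)
  have hle (n : ℕ) : (r.factorial * exStarCount n r F : ℝ) ≤ exDegPow n r F := by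
    exact_mod_cast factorial_mul_exStarCount_le F hedge n r
  have hgap (n T : ℕ) : (T * exDegPow n r F : ℝ) ≤ T * (r.factorial * exStarCount n r F) +
      ((r * (r - 1) : ℕ) : ℝ) * (n * T ^ r + exDegPow n r F) := by
    exact_mod_cast mul_exDegPow_le F hedge n T r
  have hsmall :
      Tendsto (fun n : ℕ => ((r * (r - 1) : ℕ) : ℝ) * n / exDegPow n r F) atTop (𝓝 0) := by
    rcases lt_or_ge r 2 with hr | hr
    · have hL : r * (r - 1) = 0 := by interval_cases r <;> rfl
      simp [hL]
    · simpa [mul_div_assoc] using (tendsto_natCast_div_exDegPow F hedge hnostar hr).const_mul _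
  have hlim := (tendsto_div_nhds_one_of_forall_mul_le hpos hle hgap hsmall).div_const
    (r.factorial : ℝ)
  refine hlim.congr fun n => ?_
  field_simp

/-- If `F` is a finite graph with at least one edge such that no single
vertex of `F` is incident to all edges of `F`, then
`ex(n, S_r, F) = (1/r! + o(1)) · ex_r(n, F)` as `n → ∞`. -/
theorem stmt_0 {α : Type*} [Fintype α] (r : ℕ) (hr : 1 ≤ r) (F : SimpleGraph α)
    (hedge : ∃ a b, F.Adj a b)
    (hnostar : ∀ v : α, ∃ a b, F.Adj a b ∧ a ≠ v ∧ b ≠ v) :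
    Filter.Tendsto (fun n : ℕ => (exStarCount n r F : ℝ) / (exDegPow n r F : ℝ))
      Filter.atTop (nhds (1 / (Nat.factorial r : ℝ))) :=
  stmt_0_general r F hedge hnostar
end

section
/- Let r be a positive integer and let G be a C_4-free graph on n vertices with |E(G)| ≤ ⌊3(n−1)/2⌋ = |E(F_n)|. Then e_r(G) ≤ e_r(F_n). -/
open Finset

/-- The friendship graph `F_n` on `n` vertices: vertex `0` is adjacent to all other
vertices, and the remaining `n − 1` vertices carry the maximum matching
`{1,2}, {3,4}, …` with `⌊(n−1)/2⌋` edges. -/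
def friendshipGraph (n : ℕ) : SimpleGraph (Fin n) :=
  mkGraph (fun v w => v.val = 0 ∨ (v.val % 2 = 1 ∧ w.val = v.val + 1))

/-!
Writing `d ^ r = ∑ₚ S(r, p) p! C(d, p)` with Stirling numbers of the second kind reduces
`e_r(G) ≤ e_r(F_n)` to the same inequality for every star count `∑ᵥ C(d(v), p)`.
For `p = 1` this is the edge bound. For `p = 2`, C₄-freeness makes the sets of neighbour pairs
of distinct vertices disjoint, so `∑ᵥ C(d(v), 2) ≤ C(n, 2)`; when `n` is even, `F_n` misses
this by one, and equality would force every two vertices to have a common neighbour, which costs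
at least `3(n - 1)/2` edges. For `p ≥ 3`, two distinct vertices share at most one neighbour, so
their degrees add up to at most `n + 1`: all vertices but one of maximum degree `a` have degree
at most `m = min(a, n + 1 - a)`. Since `C(x, p)/x` increases in `x`, the star count is at most
`C(a, p) + (3(n - 1) - a) C(m, p)/m`, and a binomial estimate bounds this by `C(n - 1, p)`.
-/

lemma choose_succ_add_mul_choose_le {m N q : ℕ} (h : m ≤ N) :
    m.choose (q + 1) + (N - m) * m.choose q ≤ N.choose (q + 1) := by
  induction N, h using Nat.le_induction with
  | base => simp
  | succ N hmN ih =>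
    have hmono : m.choose q ≤ N.choose q := Nat.choose_le_choose q hmN
    rw [Nat.choose_succ_succ N q, show N + 1 - m = N - m + 1 by omega]
    nlinarith

lemma mul_choose_le_mul_choose {x m p : ℕ} (hx : x ≤ m) (hp : p ≠ 0) :
    m * x.choose p ≤ x * m.choose p := by
  obtain ⟨q, rfl⟩ := Nat.exists_eq_succ_of_ne_zero hp
  rcases Nat.eq_zero_or_pos x with rfl | hx0
  · simp
  obtain ⟨x, rfl⟩ := Nat.exists_eq_add_of_le' hx0
  obtain ⟨m, rfl⟩ := Nat.exists_eq_add_of_le' (hx0.trans_le hx)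
  refine Nat.le_of_mul_le_mul_right ?_ q.succ_pos
  calc (m + 1) * (x + 1).choose (q + 1) * (q + 1)
      = (m + 1) * ((x + 1) * x.choose q) := by rw [Nat.add_one_mul_choose_eq]; ring
    _ ≤ (m + 1) * ((x + 1) * m.choose q) := by gcongr; omega
    _ = (x + 1) * (m + 1).choose (q + 1) * (q + 1) := by
      rw [mul_assoc (x + 1), ← Nat.add_one_mul_choose_eq]; ring

lemma six_mul_choose_three (x : ℕ) : 6 * x.choose 3 = x * (x - 1) * (x - 2) := by
  rw [show 6 = (3).factorial by rfl, ← Nat.descFactorial_eq_factorial_mul_choose]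
  simp only [Nat.descFactorial, tsub_zero, mul_one]; ring

lemma three_mul_mul_choose_le {a N p : ℕ} (hp : 3 ≤ p) (hpa : p ≤ a) (hN : 2 * a ≤ N + 2) :
    3 * N * a.choose p ≤ a * N.choose p := by
  induction p, hp using Nat.le_induction with
  | base =>
    obtain ⟨c, rfl⟩ := Nat.exists_eq_add_of_le' hpa
    obtain ⟨d, rfl⟩ : ∃ d, N = 2 * c + 4 + d := ⟨N - (2 * c + 4), by omega⟩
    refine Nat.le_of_mul_le_mul_left ?_ (show 0 < 6 by norm_num)
    calc 6 * (3 * (2 * c + 4 + d) * (c + 3).choose 3)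
        = 3 * (2 * c + 4 + d) * (6 * (c + 3).choose 3) := by ring
      _ ≤ (c + 3) * (6 * (2 * c + 4 + d).choose 3) := by
        rw [six_mul_choose_three, six_mul_choose_three]
        simp only [show c + 3 - 1 = c + 2 by omega, show c + 3 - 2 = c + 1 by omega,
          show 2 * c + 4 + d - 1 = 2 * c + 3 + d by omega,
          show 2 * c + 4 + d - 2 = 2 * c + 2 + d by omega]
        nlinarith [Nat.zero_le (c * d), Nat.zero_le (d * d), Nat.zero_le (c * c * d)]
      _ = 6 * ((c + 3) * (2 * c + 4 + d).choose 3) := by ring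
  | succ p hp ih =>
    refine Nat.le_of_mul_le_mul_right ?_ p.succ_pos
    calc 3 * N * a.choose (p + 1) * (p + 1)
        = 3 * N * a.choose p * (a - p) := by rw [mul_assoc, Nat.choose_succ_right_eq]; ring
      _ ≤ a * N.choose p * (N - p) := Nat.mul_le_mul (ih (by omega)) (by omega)
      _ = a * N.choose (p + 1) * (p + 1) := by rw [mul_assoc, mul_assoc, Nat.choose_succ_right_eq]

lemma two_mul_choose_add_two_le {b q : ℕ} (hq : 1 ≤ q) (hqb : q + 2 ≤ b) :
    2 * b.choose (q + 2) ≤ b * (b - 2) * b.choose q := by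
  obtain ⟨e, rfl⟩ : ∃ e, b = e + q + 2 := ⟨b - q - 2, by omega⟩
  refine Nat.le_of_mul_le_mul_right (c := (q + 2) * (q + 1)) ?_ (by positivity)
  have h1 := Nat.choose_succ_right_eq (e + q + 2) (q + 1)
  have h2 := Nat.choose_succ_right_eq (e + q + 2) q
  simp only [show e + q + 2 - (q + 1) = e + 1 by omega, show e + q + 2 - q = e + 2 by omega]
    at h1 h2
  calc 2 * (e + q + 2).choose (q + 2) * ((q + 2) * (q + 1))
      = 2 * (e + 1) * (e + 2) * (e + q + 2).choose q := by
        rw [show q + 2 = q + 1 + 1 by rfl]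
        nlinarith [h1, h2]
    _ ≤ (e + q + 2) * (e + q + 2 - 2) * ((q + 2) * (q + 1)) * (e + q + 2).choose q := by
        refine Nat.mul_le_mul_right _ ?_
        rw [show e + q + 2 - 2 = e + q by omega]
        have h6 : 6 ≤ (q + 2) * (q + 1) := by nlinarith
        have hle :=
          Nat.mul_le_mul (show e + 2 ≤ e + q + 2 by omega) (show e + 1 ≤ e + q by omega)
        nlinarith
    _ = _ := by ring

lemma mul_choose_add_mul_choose_le {a b p : ℕ} (hp : 3 ≤ p) (hpb : p ≤ b) (hba : b ≤ a) :
    b * a.choose p + (2 * a + 3 * b - 6) * b.choose p ≤ b * (a + b - 2).choose p := by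
  induction a, hba using Nat.le_induction with
  | base =>
    calc b * b.choose p + (2 * b + 3 * b - 6) * b.choose p = 3 * (b + b - 2) * b.choose p := by
          rw [← Nat.add_mul]; congr 1; omega
      _ ≤ b * (b + b - 2).choose p := three_mul_mul_choose_le hp hpb (by omega)
  | succ a hba ih =>
    obtain ⟨q, rfl⟩ : ∃ q, p = q + 2 := ⟨p - 2, by omega⟩
    have hpascal : (a + 1 + b - 2).choose (q + 2)
        = (a + b - 2).choose (q + 1) + (a + b - 2).choose (q + 2) := by
      rw [show a + 1 + b - 2 = a + b - 2 + 1 by omega, Nat.choose_succ_succ]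
    have hlower := choose_succ_add_mul_choose_le (q := q) (show a ≤ a + b - 2 by omega)
    rw [show a + b - 2 - a = b - 2 by omega] at hlower
    have hb := two_mul_choose_add_two_le (show 1 ≤ q by omega) hpb
    have hmono : b * (b - 2) * b.choose q ≤ b * (b - 2) * a.choose q :=
      Nat.mul_le_mul_left _ (Nat.choose_le_choose q hba)
    rw [hpascal, Nat.choose_succ_succ,
      show 2 * (a + 1) + 3 * b - 6 = 2 * a + 3 * b - 6 + 2 by omega]
    nlinarith

lemma min_mul_choose_add_mul_choose_min_le {a N p : ℕ} (hp : 3 ≤ p) (ha : a ≤ N) :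
    min a (N + 2 - a) * a.choose p + (3 * N - a) * (min a (N + 2 - a)).choose p
      ≤ min a (N + 2 - a) * N.choose p := by
  set m := min a (N + 2 - a)
  rcases lt_or_ge m p with hmp | hpm
  · rw [Nat.choose_eq_zero_of_lt hmp, mul_zero, add_zero]
    exact Nat.mul_le_mul_left m (Nat.choose_le_choose p ha)
  rcases le_total (2 * a) (N + 2) with hsmall | hlarge
  · have hma : m = a := by omega
    rw [hma, ← Nat.add_mul, show a + (3 * N - a) = 3 * N by omega]
    exact three_mul_mul_choose_le hp (hma ▸ hpm) hsmall
  · have hmb : m = N + 2 - a := by omega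
    have key := mul_choose_add_mul_choose_le hp (hmb ▸ hpm) (show N + 2 - a ≤ a by omega)
    rwa [show 2 * a + 3 * (N + 2 - a) - 6 = 3 * N - a by omega,
      show a + (N + 2 - a) - 2 = N by omega, ← hmb] at key

open Nat (stirlingSecond)

lemma mul_descFactorial_eq (x p : ℕ) :
    x * x.descFactorial p = x.descFactorial (p + 1) + p * x.descFactorial p := by
  rcases le_or_gt p x with h | h
  · rw [Nat.descFactorial_succ, ← Nat.add_mul, Nat.sub_add_cancel h]
  · rw [Nat.descFactorial_eq_zero_iff_lt.mpr h, Nat.descFactorial_eq_zero_iff_lt.mpr (by omega)]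
    simp

lemma pow_eq_sum_stirlingSecond_mul_descFactorial (x r : ℕ) :
    x ^ r = ∑ p ∈ range (r + 1), stirlingSecond r p * x.descFactorial p := by
  induction r with
  | zero => simp
  | succ r ih =>
    have hshift : ∑ p ∈ range (r + 1), p * stirlingSecond r p * x.descFactorial p
        = ∑ p ∈ range (r + 1),
            (p + 1) * stirlingSecond r (p + 1) * x.descFactorial (p + 1) := by
      rw [sum_range_succ', sum_range_succ _ r,
        Nat.stirlingSecond_eq_zero_of_lt (Nat.lt_succ_self r)]
      simp
    calc x ^ (r + 1)
        = ∑ p ∈ range (r + 1), stirlingSecond r p * x.descFactorial (p + 1)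
          + ∑ p ∈ range (r + 1), p * stirlingSecond r p * x.descFactorial p := by
          rw [pow_succ, ih, sum_mul, ← sum_add_distrib]
          refine sum_congr rfl fun p _ => ?_
          rw [mul_assoc, mul_comm (x.descFactorial p), mul_descFactorial_eq]; ring
      _ = ∑ p ∈ range (r + 1), stirlingSecond r p * x.descFactorial (p + 1)
          + ∑ p ∈ range (r + 1),
              (p + 1) * stirlingSecond r (p + 1) * x.descFactorial (p + 1) := by
          rw [hshift]
      _ = ∑ p ∈ range (r + 2), stirlingSecond (r + 1) p * x.descFactorial p := by
          rw [sum_range_succ' _ (r + 1), ← sum_add_distrib]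
          simp only [Nat.stirlingSecond_succ_succ, Nat.stirlingSecond_succ_zero, zero_mul,
            add_zero]
          exact sum_congr rfl fun p _ => by ring

lemma sum_pow_eq_sum_stirlingSecond_mul_sum_choose {ι : Type*} (s : Finset ι) (f : ι → ℕ)
    (r : ℕ) : ∑ i ∈ s, f i ^ r
      = ∑ p ∈ range (r + 1),
          stirlingSecond r p * p.factorial * ∑ i ∈ s, (f i).choose p := by
  simp_rw [pow_eq_sum_stirlingSecond_mul_descFactorial, Nat.descFactorial_eq_factorial_mul_choose,
    mul_sum]
  rw [sum_comm]
  exact sum_congr rfl fun p _ => sum_congr rfl fun i _ => by ring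

lemma sum_pow_le_sum_pow_of_sum_choose_le {ι κ : Type*} {s : Finset ι} {t : Finset κ}
    {f : ι → ℕ} {g : κ → ℕ}
    (h : ∀ p, ∑ i ∈ s, (f i).choose p ≤ ∑ j ∈ t, (g j).choose p)
    (r : ℕ) : ∑ i ∈ s, f i ^ r ≤ ∑ j ∈ t, g j ^ r := by
  rw [sum_pow_eq_sum_stirlingSecond_mul_sum_choose, sum_pow_eq_sum_stirlingSecond_mul_sum_choose]
  exact sum_le_sum fun p _ => Nat.mul_le_mul_left _ (h p)

open SimpleGraph

section CycleFourFree

variable {V : Type*} [Fintype V] {G : SimpleGraph V} [DecidableRel G.Adj]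

lemma two_le_degree_of_exists_adj_adj (hcom : ∀ x y, x ≠ y → ∃ v, G.Adj v x ∧ G.Adj v y)
    {w z : V} (hwz : w ≠ z) : 2 ≤ G.degree w := by
  obtain ⟨x, hxw, -⟩ := hcom w z hwz
  obtain ⟨u, huw, hux⟩ := hcom w x hxw.ne'
  exact one_lt_card.mpr ⟨x, by simpa using hxw.symm, u, by simpa using huw.symm, hux.ne'⟩

variable [DecidableEq V]

lemma card_inter_neighborFinset_le_one (hfree : ¬ Contains (cycleGraph 4) G) {x y : V}
    (hxy : x ≠ y) : #(G.neighborFinset x ∩ G.neighborFinset y) ≤ 1 := by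
  by_contra! h
  obtain ⟨v, hv, w, hw, hvw⟩ := one_lt_card.mp h
  simp only [mem_inter, mem_neighborFinset] at hv hw
  refine hfree ⟨⟨![v, x, w, y], ?_⟩, ?_⟩
  · intro i j hij
    fin_cases i <;> fin_cases j <;>
      simp_all [hv.1.ne, hv.2.ne, hw.1.ne, hw.2.ne, hv.1.ne', hv.2.ne', hw.1.ne', hw.2.ne',
        hxy.symm, hvw.symm]
  · intro i j hij
    show G.Adj (![v, x, w, y] i) (![v, x, w, y] j)
    rw [cycleGraph_adj'] at hij
    fin_cases i <;> fin_cases j <;> first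
      | exact absurd hij (by decide)
      | simp [adj_comm, hv, hw]

lemma degree_add_degree_le (hfree : ¬ Contains (cycleGraph 4) G) {x y : V} (hxy : x ≠ y) :
    G.degree x + G.degree y ≤ Fintype.card V + 1 := by
  have := card_union_add_card_inter (G.neighborFinset x) (G.neighborFinset y)
  have := card_le_univ (G.neighborFinset x ∪ G.neighborFinset y)
  have := card_inter_neighborFinset_le_one hfree hxy
  simp only [card_neighborFinset_eq_degree] at *
  omega

lemma sum_choose_two_degree_le_card (hfree : ¬ Contains (cycleGraph 4) G)
    {S : Finset (Finset V)} (hS : ∀ v, (G.neighborFinset v).powersetCard 2 ⊆ S) :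
    ∑ v, (G.degree v).choose 2 ≤ #S := by
  have hdisj : ((univ : Finset V) : Set V).PairwiseDisjoint
      fun v => (G.neighborFinset v).powersetCard 2 := by
    intro v _ w _ hvw
    refine disjoint_left.mpr fun s hsv hsw => ?_
    rw [mem_powersetCard] at hsv hsw
    have := card_le_card (subset_inter hsv.1 hsw.1)
    have := card_inter_neighborFinset_le_one hfree hvw
    omega
  calc ∑ v, (G.degree v).choose 2 = ∑ v, #((G.neighborFinset v).powersetCard 2) := by
        simp [card_powersetCard]
    _ = #(univ.biUnion fun v => (G.neighborFinset v).powersetCard 2) := (card_biUnion hdisj).symm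
    _ ≤ #S := card_le_card (biUnion_subset.mpr fun v _ => hS v)

lemma sum_choose_two_degree_le_choose_two (hfree : ¬ Contains (cycleGraph 4) G) :
    ∑ v, (G.degree v).choose 2 ≤ (Fintype.card V).choose 2 := by
  simpa using sum_choose_two_degree_le_card hfree (S := univ.powersetCard 2)
    fun v => powersetCard_mono (subset_univ _)

lemma three_mul_card_sub_one_le_sum_degree [Nonempty V]
    (hcom : ∀ x y, x ≠ y → ∃ v, G.Adj v x ∧ G.Adj v y) :
    3 * (Fintype.card V - 1) ≤ ∑ v, G.degree v := by
  obtain ⟨z⟩ := ‹Nonempty V›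
  set N := G.neighborFinset z
  set W := (insert z N)ᶜ
  have hzN : z ∉ N := by simp [N]
  have hW : ∀ w ∈ W, w ≠ z ∧ ¬ G.Adj z w := by
    intro w hw
    simpa [W, N, not_or] using hw
  have hcard : #N + #W = Fintype.card V - 1 := by
    have : #(insert z N) + #W = Fintype.card V := card_add_card_compl _
    rw [card_insert_of_notMem hzN] at this
    omega
  have hsum : ∑ v, G.degree v = #N + ∑ x ∈ N, G.degree x + ∑ w ∈ W, G.degree w := by
    rw [← sum_add_sum_compl (insert z N), sum_insert hzN]
    rfl
  have hdegW : ∀ w ∈ W, 2 ≤ G.degree w :=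
    fun w hw => two_le_degree_of_exists_adj_adj hcom (hW w hw).1
  have hdegN : ∀ x ∈ N, 2 + #(W.bipartiteAbove G.Adj x) ≤ G.degree x := by
    intro x hx
    have hzx : G.Adj z x := by simpa [N] using hx
    obtain ⟨u, hux, huz⟩ := hcom x z hzx.ne'
    have huN : u ∈ N := by simpa [N] using huz.symm
    have hsub : insert z (insert u (W.bipartiteAbove G.Adj x)) ⊆ G.neighborFinset x := by
      intro y hy
      simp only [mem_insert, bipartiteAbove, mem_filter] at hy
      rcases hy with rfl | rfl | ⟨-, hxy⟩ <;> simp [hzx.symm, hux.symm, *]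
    have huW : u ∉ W.bipartiteAbove G.Adj x := by simp [bipartiteAbove, W, huN]
    have hzW : z ∉ insert u (W.bipartiteAbove G.Adj x) := by
      simp [bipartiteAbove, W, huz.ne']
    have := card_le_card hsub
    rw [card_insert_of_notMem hzW, card_insert_of_notMem huW] at this
    simp only [card_neighborFinset_eq_degree] at this
    omega
  have hbelow : ∀ w ∈ W, 1 ≤ #(N.bipartiteBelow G.Adj w) := by
    intro w hw
    obtain ⟨v, hvw, hvz⟩ := hcom w z (hW w hw).1
    exact card_pos.mpr ⟨v, by simp [bipartiteBelow, N, hvw, hvz.symm]⟩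
  have hdouble := sum_card_bipartiteAbove_eq_sum_card_bipartiteBelow (s := N) (t := W) (r := G.Adj)
  have h1 := sum_le_sum hdegW
  have h2 := sum_le_sum hdegN
  have h3 := sum_le_sum hbelow
  simp only [sum_add_distrib, sum_const, smul_eq_mul] at h1 h2 h3
  omega

lemma sum_choose_two_degree_lt_choose_two (hfree : ¬ Contains (cycleGraph 4) G)
    (hsum : ∑ v, G.degree v < 3 * (Fintype.card V - 1)) :
    ∑ v, (G.degree v).choose 2 < (Fintype.card V).choose 2 := by
  by_cases hcom : ∀ x y, x ≠ y → ∃ v, G.Adj v x ∧ G.Adj v y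
  · have : Nonempty V := Fintype.card_pos_iff.mp (by omega)
    have := three_mul_card_sub_one_le_sum_degree hcom
    omega
  push Not at hcom
  obtain ⟨x, y, hxy, hno⟩ := hcom
  have hpair : {x, y} ∈ univ.powersetCard 2 :=
    mem_powersetCard.mpr ⟨subset_univ _, card_pair hxy⟩
  have hS : ∀ v, (G.neighborFinset v).powersetCard 2 ⊆ (univ.powersetCard 2).erase {x, y} := by
    intro v s hs
    refine mem_erase.mpr ⟨?_, powersetCard_mono (subset_univ _) hs⟩
    rintro rfl
    have hsub := (mem_powersetCard.mp hs).1
    exact hno v (by simpa using hsub (mem_insert_self x {y}))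
      (by simpa using hsub (mem_insert_of_mem (mem_singleton_self y)))
  have := sum_choose_two_degree_le_card hfree hS
  rw [card_erase_of_mem hpair, card_powersetCard, card_univ] at this
  have := card_pos.mpr ⟨_, hpair⟩
  rw [card_powersetCard, card_univ] at this
  omega

lemma sum_choose_degree_le_choose_card_sub_one (hfree : ¬ Contains (cycleGraph 4) G) {p : ℕ}
    (hp : 3 ≤ p) (hsum : ∑ v, G.degree v ≤ 3 * (Fintype.card V - 1)) :
    ∑ v, (G.degree v).choose p ≤ (Fintype.card V - 1).choose p := by
  rcases isEmpty_or_nonempty V with hV | hV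
  · simp
  obtain ⟨v₀, -, hmax⟩ := exists_max_image univ (fun v => G.degree v) univ_nonempty
  set N := Fintype.card V - 1
  set a := G.degree v₀
  set m := min a (N + 2 - a)
  have ha : a ≤ N := by have := G.degree_lt_card_verts v₀; omega
  have hrest : ∀ v ∈ univ.erase v₀, G.degree v ≤ m := by
    intro v hv
    have := hmax v (mem_univ v)
    have := degree_add_degree_le hfree (ne_of_mem_erase hv)
    omega
  have hsplit : a + ∑ v ∈ univ.erase v₀, G.degree v = ∑ v, G.degree v :=
    add_sum_erase _ (fun v => G.degree v) (mem_univ v₀)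
  rcases Nat.eq_zero_or_pos m with hm0 | hm0
  · have hzero : ∀ v, G.degree v = 0 := fun v => by have := hmax v (mem_univ v); omega
    simp [hzero, Nat.choose_eq_zero_of_lt (show 0 < p by omega)]
  refine Nat.le_of_mul_le_mul_left ?_ hm0
  calc m * ∑ v, (G.degree v).choose p
      = m * a.choose p + ∑ v ∈ univ.erase v₀, m * (G.degree v).choose p := by
        rw [← add_sum_erase _ _ (mem_univ v₀), mul_add, mul_sum]
    _ ≤ m * a.choose p + ∑ v ∈ univ.erase v₀, G.degree v * m.choose p := by
        gcongr m * a.choose p + ?_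
        exact sum_le_sum fun v hv => mul_choose_le_mul_choose (hrest v hv) (by omega)
    _ = m * a.choose p + (∑ v ∈ univ.erase v₀, G.degree v) * m.choose p := by rw [sum_mul]
    _ ≤ m * a.choose p + (3 * N - a) * m.choose p := by gcongr; omega
    _ ≤ m * N.choose p := min_mul_choose_add_mul_choose_min_le hp ha

end CycleFourFree

section Counts

variable {V : Type*} [Fintype V] {G : SimpleGraph V}

lemma ncard_neighborSet_eq_degree [DecidableRel G.Adj] (v : V) :
    (G.neighborSet v).ncard = G.degree v := by
  rw [Set.ncard_eq_toFinset_card']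
  rfl

lemma starCount_eq_sum_choose_degree [DecidableRel G.Adj] (p : ℕ) :
    starCount G p = ∑ v, (G.degree v).choose p := by
  simp only [starCount, ncard_neighborSet_eq_degree]

variable (G) in
lemma sum_degree_eq_two_mul_edgeCount [DecidableEq V] [DecidableRel G.Adj] :
    ∑ v, G.degree v = 2 * edgeCount G := by
  rw [sum_degrees_eq_twice_card_edges, edgeCount, Set.ncard_eq_toFinset_card']
  rfl

lemma degPow_le_degPow_of_starCount_le {W : Type*} [Fintype W] {H : SimpleGraph W}
    (h : ∀ p, starCount G p ≤ starCount H p) (r : ℕ) : degPow G r ≤ degPow H r :=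
  sum_pow_le_sum_pow_of_sum_choose_le h r

end Counts

section Friendship

instance (n : ℕ) : DecidableRel (friendshipGraph n).Adj := fun _ _ => by
  unfold friendshipGraph mkGraph; infer_instance

lemma friendshipGraph_adj {n : ℕ} {v w : Fin n} :
    (friendshipGraph n).Adj v w ↔ v ≠ w ∧
      ((v.val = 0 ∨ (v.val % 2 = 1 ∧ w.val = v.val + 1)) ∨
        (w.val = 0 ∨ (w.val % 2 = 1 ∧ v.val = w.val + 1))) :=
  Iff.rfl

lemma friendshipGraph_degree {n : ℕ} (v : Fin n) :
    (friendshipGraph n).degree v =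
      if v.val = 0 then n - 1 else if v.val % 2 = 1 ∧ v.val + 1 = n then 1 else 2 := by
  have hn : 0 < n := v.pos
  rw [← card_neighborFinset_eq_degree]
  split_ifs with h0 hlast
  · rw [show (friendshipGraph n).neighborFinset v = univ.erase v by
        ext w
        simp only [mem_neighborFinset, friendshipGraph_adj, ne_eq, Fin.ext_iff, mem_erase,
          mem_univ, and_true]
        omega,
      card_erase_of_mem (mem_univ v), card_univ, Fintype.card_fin]
  · rw [show (friendshipGraph n).neighborFinset v = {⟨0, hn⟩} by
        ext w
        simp only [mem_neighborFinset, friendshipGraph_adj, ne_eq, Fin.ext_iff, mem_singleton]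
        omega,
      card_singleton]
  · obtain ⟨u, hu⟩ : ∃ u : Fin n, u.val = if v.val % 2 = 1 then v.val + 1 else v.val - 1 :=
      ⟨⟨if v.val % 2 = 1 then v.val + 1 else v.val - 1, by split_ifs <;> omega⟩, rfl⟩
    rw [show (friendshipGraph n).neighborFinset v = {⟨0, hn⟩, u} by
        ext w
        simp only [mem_neighborFinset, friendshipGraph_adj, ne_eq, Fin.ext_iff, mem_insert,
          mem_singleton]
        split_ifs at hu <;> omega,
      card_pair (by simp only [ne_eq, Fin.ext_iff]; split_ifs at hu <;> omega)]

lemma sum_friendshipGraph_degree (g : ℕ → ℕ) (k : ℕ) :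
    ∑ v, g ((friendshipGraph (k + 1)).degree v) = g k + (k - k % 2) * g 2 + k % 2 * g 1 := by
  simp_rw [friendshipGraph_degree]
  rw [Fin.sum_univ_eq_sum_range
    (fun i => g (if i = 0 then k + 1 - 1 else if i % 2 = 1 ∧ i + 1 = k + 1 then 1 else 2)),
    sum_range_succ']
  simp only [Nat.add_sub_cancel, if_pos, Nat.add_one_ne_zero, if_false, add_left_inj]
  obtain ⟨m, rfl | rfl⟩ := Nat.even_or_odd' k
  · rw [sum_congr rfl fun i hi => by
      rw [if_neg (by simp at hi; omega)]]
    simp only [sum_const, card_range, smul_eq_mul, Nat.mul_mod_right, tsub_zero, zero_mul,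
      add_zero]
    ring
  · rw [sum_range_succ, sum_congr rfl fun i hi => by
      rw [if_neg (by simp at hi; omega)], if_pos (by omega)]
    simp only [sum_const, card_range, smul_eq_mul, Nat.mul_add_mod_self_left, Nat.mod_succ,
      add_tsub_cancel_right, one_mul]
    ring

lemma edgeCount_friendshipGraph (n : ℕ) : edgeCount (friendshipGraph n) = 3 * (n - 1) / 2 := by
  have := sum_degree_eq_two_mul_edgeCount (friendshipGraph n)
  obtain _ | k := n
  · simp at this
    omega
  have hF := sum_friendshipGraph_degree id k
  simp only [id] at hF
  omega

lemma starCount_friendshipGraph (k p : ℕ) :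
    starCount (friendshipGraph (k + 1)) p
      = k.choose p + (k - k % 2) * (2 : ℕ).choose p + k % 2 * (1 : ℕ).choose p := by
  rw [starCount_eq_sum_choose_degree, sum_friendshipGraph_degree (·.choose p)]

end Friendship

lemma starCount_le_starCount_friendshipGraph {n : ℕ} {G : SimpleGraph (Fin n)}
    (hfree : ¬ Contains (cycleGraph 4) G) (hE : edgeCount G ≤ 3 * (n - 1) / 2) (p : ℕ) :
    starCount G p ≤ starCount (friendshipGraph n) p := by
  classical
  obtain _ | k := n
  · simp [starCount]
  have hsum : ∑ v, G.degree v ≤ 2 * (3 * k / 2) := by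
    rw [sum_degree_eq_two_mul_edgeCount G]
    simpa using hE
  rw [starCount_eq_sum_choose_degree, starCount_friendshipGraph]
  match p with
  | 0 =>
    simp only [Nat.choose_zero_right, sum_const, card_univ, Fintype.card_fin, smul_eq_mul, mul_one]
    omega
  | 1 =>
    simp only [Nat.choose_one_right]
    omega
  | 2 =>
    have hpascal : (k + 1).choose 2 = k + k.choose 2 := by
      rw [Nat.choose_succ_succ', Nat.choose_one_right]
    rcases Nat.mod_two_eq_zero_or_one k with hk | hk
    · have := sum_choose_two_degree_le_choose_two hfree
      simp only [Fintype.card_fin, hpascal] at this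
      simp only [Nat.choose_self, Nat.choose_succ_self]
      omega
    · have := sum_choose_two_degree_lt_choose_two hfree (by rw [Fintype.card_fin]; omega)
      simp only [Fintype.card_fin, hpascal] at this
      simp only [Nat.choose_self, Nat.choose_succ_self]
      omega
  | q + 3 =>
    have := sum_choose_degree_le_choose_card_sub_one hfree (p := q + 3) (by omega)
      (by rw [Fintype.card_fin]; omega)
    simpa [Nat.choose_eq_zero_of_lt] using this

theorem stmt_5_general (r n : ℕ) (G : SimpleGraph (Fin n))
    (hfree : ¬ Contains (SimpleGraph.cycleGraph 4) G)
    (hE : edgeCount G ≤ 3 * (n - 1) / 2) :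
    edgeCount (friendshipGraph n) = 3 * (n - 1) / 2 ∧
      degPow G r ≤ degPow (friendshipGraph n) r :=
  ⟨edgeCount_friendshipGraph n,
    degPow_le_degPow_of_starCount_le (starCount_le_starCount_friendshipGraph hfree hE) r⟩

/-- For any `C_4`-free graph `G` on `n` vertices with
`|E(G)| ≤ ⌊3(n−1)/2⌋ = |E(F_n)|`, we have `e_r(G) ≤ e_r(F_n)`. -/
theorem stmt_5 (r n : ℕ) (hr : 1 ≤ r) (G : SimpleGraph (Fin n))
    (hfree : ¬ Contains (SimpleGraph.cycleGraph 4) G)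
    (hE : edgeCount G ≤ 3 * (n - 1) / 2) :
    edgeCount (friendshipGraph n) = 3 * (n - 1) / 2 ∧
      degPow G r ≤ degPow (friendshipGraph n) r :=
  stmt_5_general r n G hfree hE
end

section
/- Let 2 ≤ s ≤ t be integers and let G_0 be a graph with girth at least 5 in which every vertex has degree at most t − 1. Then the join of the complete graph K_{s−1} with G_0 contains no subgraph isomorphic to the complete bipartite graph K_{s,t}. -/
open Finset

/-- The join of two graphs: their disjoint union together with all edges between them. -/
def joinGraph {α β : Type*} (G : SimpleGraph α) (H : SimpleGraph β) : SimpleGraph (α ⊕ β) :=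
  mkGraph (fun v w =>
    (∃ a b, v = Sum.inl a ∧ w = Sum.inl b ∧ G.Adj a b) ∨
    (∃ a b, v = Sum.inr a ∧ w = Sum.inr b ∧ H.Adj a b) ∨
    (v.isLeft = true ∧ w.isRight = true))

/-!
Vertices of `K_{s,t}` sent into the clique `K_{s-1}` number at most `s - 1`, so the vertices
of the two sides that land in `G₀` form sets `A`, `B` with `|A| + |B| ≥ t + 1`, completely
joined to each other in `G₀`; both are nonempty because `s ≤ t`. Girth at least 5 rules out a
4-cycle, so one of `A`, `B` is a single vertex, whose degree is then at least `t`.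
-/

open SimpleGraph Function

namespace SimpleGraph

variable {V : Type*} {G : SimpleGraph V}

theorem commonNeighbors_subsingleton_of_five_le_egirth (hG : 5 ≤ G.egirth) {a₁ a₂ : V}
    (ha : a₁ ≠ a₂) : (G.commonNeighbors a₁ a₂).Subsingleton := by
  rintro b₁ ⟨h₁₁ : G.Adj a₁ b₁, h₂₁ : G.Adj a₂ b₁⟩ b₂ ⟨h₁₂ : G.Adj a₁ b₂, h₂₂ : G.Adj a₂ b₂⟩
  by_contra hb
  let w : G.Walk a₁ a₁ := .cons h₁₁ (.cons h₂₁.symm (.cons h₂₂ (.cons h₁₂.symm .nil)))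
  have hw : w.IsCircuit := by
    refine ⟨⟨?_⟩, by simp [w]⟩
    simp [w, ha, hb, ha.symm, h₁₁.ne, h₁₂.ne, h₂₂.ne, h₁₂.ne']
  have := hG.trans hw.egirth_le_length
  norm_num [w] at this

theorem card_add_card_le_of_five_le_egirth [Finite V] (hG : 5 ≤ G.egirth) {d : ℕ}
    (hdeg : ∀ v, (G.neighborSet v).ncard ≤ d) {A B : Finset V} (hA : A.Nonempty)
    (hB : B.Nonempty) (hAB : ∀ a ∈ A, ∀ b ∈ B, G.Adj a b) : #A + #B ≤ d + 1 := by
  have star : ∀ v (S : Finset V), (∀ w ∈ S, G.Adj v w) → #S ≤ d := fun v S hS =>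
    calc #S = (S : Set V).ncard := (Set.ncard_coe_finset S).symm
      _ ≤ (G.neighborSet v).ncard := Set.ncard_le_ncard hS
      _ ≤ d := hdeg v
  rcases le_or_gt #A 1 with hA1 | hA1
  · obtain ⟨a, ha⟩ := hA
    have := star a B (hAB a ha)
    omega
  rcases le_or_gt #B 1 with hB1 | hB1
  · obtain ⟨b, hb⟩ := hB
    have := star b A fun a ha => (hAB a ha b hb).symm
    omega
  obtain ⟨a₁, ha₁, a₂, ha₂, ha⟩ := one_lt_card.mp hA1
  obtain ⟨b₁, hb₁, b₂, hb₂, hb⟩ := one_lt_card.mp hB1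
  exact absurd (commonNeighbors_subsingleton_of_five_le_egirth hG ha
    ⟨hAB a₁ ha₁ b₁ hb₁, hAB a₂ ha₂ b₁ hb₁⟩ ⟨hAB a₁ ha₁ b₂ hb₂, hAB a₂ ha₂ b₂ hb₂⟩) hb

end SimpleGraph

theorem joinGraph_adj_inr_inr {α β : Type*} {G : SimpleGraph α} {H : SimpleGraph β} {a b : β} :
    (joinGraph G H).Adj (.inr a) (.inr b) ↔ H.Adj a b := by
  simp only [joinGraph, mkGraph, ne_eq, exists_and_left, Sum.inr.injEq, reduceCtorEq, false_and,
    exists_false, and_self, exists_eq_left', Sum.isLeft_inr, Bool.false_eq_true, Sum.isRight_inr,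
    and_true, or_false, false_or]
  exact ⟨fun ⟨_, h⟩ => h.elim id H.adj_symm, fun h => ⟨h.ne, .inl h⟩⟩

theorem card_add_card_le_card_add_card_toRight {α β γ δ : Type*} [Fintype α] [Fintype β]
    [Fintype γ] (f : α ⊕ β ↪ γ ⊕ δ) :
    Fintype.card α + Fintype.card β ≤ Fintype.card γ +
      (#(univ.map (.trans .inl f)).toRight + #(univ.map (.trans .inr f)).toRight) := by
  classical
  calc Fintype.card α + Fintype.card β = #(univ.map f) := by simp
    _ = #(univ.map f).toLeft + #(univ.map f).toRight := card_toLeft_add_card_toRight.symm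
    _ ≤ Fintype.card γ +
        #((univ.map (.trans .inl f)).toRight ∪ (univ.map (.trans .inr f)).toRight) := by
      rw [← univ_disjSum_univ, map_disjSum, disjUnion_eq_union, toRight_union]
      exact add_le_add_left (card_le_univ _) _
    _ ≤ _ := Nat.add_le_add_left (card_union_le _ _) _

/-- For `2 ≤ s ≤ t`, if `G₀` has girth at least 5 and maximum degree
at most `t − 1`, then the join `K_{s−1} ∗ G₀` contains no copy of `K_{s,t}`. -/
theorem stmt_18 {β : Type*} [Fintype β] (s t : ℕ) (hs : 2 ≤ s) (hst : s ≤ t)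
    (G₀ : SimpleGraph β) (hgirth : 5 ≤ G₀.egirth)
    (hdeg : ∀ v, (G₀.neighborSet v).ncard ≤ t - 1) :
    ¬ Contains (completeBipartiteGraph (Fin s) (Fin t))
        (joinGraph (SimpleGraph.completeGraph (Fin (s - 1))) G₀) := by
  rintro ⟨f, hf⟩
  have hcount := card_add_card_le_card_add_card_toRight f
  simp only [Fintype.card_fin] at hcount
  set A := (univ.map (.trans .inl f)).toRight
  set B := (univ.map (.trans .inr f)).toRight
  have hAB : ∀ a ∈ A, ∀ b ∈ B, G₀.Adj a b := by
    simp only [A, B, mem_toRight, mem_map, mem_univ, true_and, Embedding.trans_apply,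
      Embedding.inl_apply, Embedding.inr_apply]
    rintro a ⟨i, hi⟩ b ⟨j, hj⟩
    simpa [hi, hj, joinGraph_adj_inr_inr] using hf (.inl i) (.inr j) (by simp)
  have hA : #A ≤ s := card_toRight_le.trans (by simp)
  have hB : #B ≤ t := card_toRight_le.trans (by simp)
  have := card_add_card_le_of_five_le_egirth hgirth hdeg (A := A) (B := B)
    (card_pos.mp (by omega)) (card_pos.mp (by omega)) hAB
  omega
end
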